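/- arXiv:1603.09275 — 2 statements merged into one kernel-verified Lean document; each statement's English description precedes it below -/
import Mathlib

section
/- Let S be an inverse semigroup with finitely many idempotents and T an inverse subsemigroup of S. Then T is finitely generated if and only if for every 𝒥-class J of S that meets T in a nonempty set, the inverse semigroup T_J is finitely generated, where T_J = T ∩ J if J is a subgroup of S, and otherwise T_J = (T ∩ J) ∪ {0} regarded as an inverse subsemigroup of the principal factor PF(J). -/
inductive InvGen {S : Type*} [Mul S] [Inv S] (X : Set S) : S → Prop
  | base {x : S} : x ∈ X → InvGen X x
  | mul {a b : S} : InvGen X a → InvGen X b → InvGen X (a * b)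
  | inv {a : S} : InvGen X a → InvGen X a⁻¹

def IsInvSub {S : Type*} [Mul S] [Inv S] (T : Set S) : Prop :=
  (∀ a ∈ T, ∀ b ∈ T, a * b ∈ T) ∧ ∀ a ∈ T, a⁻¹ ∈ T

def InvFG {S : Type*} [Mul S] [Inv S] (T : Set S) : Prop :=
  ∃ X : Finset S, ↑X ⊆ T ∧ T = {s | InvGen (↑X : Set S) s}

def Howson (S : Type*) [Mul S] [Inv S] : Prop :=
  ∀ U V : Set S, IsInvSub U → IsInvSub V → InvFG U → InvFG V → InvFG (U ∩ V)
class InverseSemigroup (S : Type*) extends Semigroup S, Inv S where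
  mul_inv_mul : ∀ a : S, a * a⁻¹ * a = a
  inv_invol : ∀ a : S, a⁻¹⁻¹ = a
  idem_comm : ∀ a b : S, (a * a⁻¹) * (b * b⁻¹) = (b * b⁻¹) * (a * a⁻¹)

def Idl {S : Type*} [Semigroup S] (a : S) : Set S :=
  {a} ∪ {x | ∃ s, s * a = x} ∪ {x | ∃ s, a * s = x} ∪ {x | ∃ s t, s * a * t = x}

def Jrel {S : Type*} [Semigroup S] (a b : S) : Prop := Idl a = Idl b

def Jcl {S : Type*} [Semigroup S] (a : S) : Set S := {b | Jrel a b}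

/-- The principal factor `PF(J)` for the `𝒥`-class `J`, regarded as `J ∪ {0}`. -/
def PF {S : Type*} (J : Set S) := Option ↥J

open Classical in
noncomputable instance {S : Type*} [InverseSemigroup S] (J : Set S) : Mul (PF J) :=
  ⟨fun a b =>
    match a, b with
    | some x, some y => if h : (x : S) * y ∈ J then (some ⟨(x : S) * y, h⟩ : Option ↥J) else none
    | _, _ => none⟩

open Classical in
noncomputable instance {S : Type*} [InverseSemigroup S] (J : Set S) : Inv (PF J) :=
  ⟨fun a =>
    match a with
    | some x => if h : (x : S)⁻¹ ∈ J then (some ⟨(x : S)⁻¹, h⟩ : Option ↥J) else none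
    | none => none⟩

/-- `T_J = (T ∩ J) ∪ {0}` as a subset of the principal factor `PF(J)`. -/
def TJ {S : Type*} [InverseSemigroup S] (J : Set S) (T : Set S) : Set (PF J) :=
  {p | p = (none : Option ↥J) ∨ ∃ x : ↥J, (x : S) ∈ T ∧ p = some x}


/-!
Every `t ∈ T` is a word `x₁ ⋯ xₙ` in the generators of `T` and their inverses, and
`t = (t t⁻¹) x₁ ⋯ xₙ`. All prefixes `uₖ = (t t⁻¹) x₁ ⋯ xₖ` of this product lie between `t t⁻¹` and `t`
in the `𝒥`-order, so they stay in the `𝒥`-class `J` of `t`, and `uₖ₊₁ = uₖ (uₖ⁻¹ uₖ xₖ₊₁)` with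
`uₖ⁻¹ uₖ xₖ₊₁ ∈ J`. Hence `T ∩ J` is generated, inside `S` and (with `0`) inside `PF(J)`, by the finite set
of idempotents of `T ∩ J` and of elements `e x ∈ T ∩ J` with `e` idempotent and `x` a generator or its
inverse. Conversely every element of `T` lies in the `𝒥`-class of an idempotent, and there are only
finitely many of those.
-/

open Set
open scoped Pointwise

namespace InverseSemigroup

variable {S : Type*} [InverseSemigroup S]

instance : InvolutiveInv S where
  inv_inv := inv_invol

lemma inv_mul_inv (a : S) : a⁻¹ * a * a⁻¹ = a⁻¹ := by
  simpa using mul_inv_mul a⁻¹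

lemma mul_inv_mul_mul_inv (a : S) : a * a⁻¹ * (a * a⁻¹) = a * a⁻¹ := by
  rw [← mul_assoc, mul_inv_mul]

lemma inv_eq_inv_mul_mul_mul_inv {e : S} (he : e * e = e) : e⁻¹ = e⁻¹ * e * (e * e⁻¹) := by
  calc e⁻¹ = e⁻¹ * (e * e) * e⁻¹ := by rw [he, inv_mul_inv]
    _ = e⁻¹ * e * (e * e⁻¹) := by simp only [mul_assoc]

lemma inv_eq_self_of_mul_self {e : S} (he : e * e = e) : e⁻¹ = e := by
  have hcomm : e⁻¹ * e * (e * e⁻¹) = e * e⁻¹ * (e⁻¹ * e) := by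
    simpa using idem_comm e⁻¹ e
  have hinv : e⁻¹ * e⁻¹ = e⁻¹ := by
    rw [inv_eq_inv_mul_mul_mul_inv he]
    calc e⁻¹ * e * (e * e⁻¹) * (e⁻¹ * e * (e * e⁻¹))
        = e⁻¹ * e * (e * e⁻¹ * (e⁻¹ * e)) * (e * e⁻¹) := by simp only [mul_assoc]
      _ = e⁻¹ * e * (e⁻¹ * e) * (e * e⁻¹ * (e * e⁻¹)) := by rw [← hcomm]; simp only [mul_assoc]
      _ = e⁻¹ * e * (e * e⁻¹) := by
        rw [mul_inv_mul_mul_inv, show e⁻¹ * e * (e⁻¹ * e) = e⁻¹ * e by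
          simpa using mul_inv_mul_mul_inv e⁻¹]
  calc e⁻¹ = e⁻¹ * e * (e * e⁻¹) := inv_eq_inv_mul_mul_mul_inv he
    _ = e * e⁻¹ * (e⁻¹ * e) := hcomm
    _ = e := by simpa using (inv_eq_inv_mul_mul_mul_inv hinv).symm

lemma mul_comm_of_mul_self {e f : S} (he : e * e = e) (hf : f * f = f) : e * f = f * e := by
  simpa [inv_eq_self_of_mul_self he, inv_eq_self_of_mul_self hf, he, hf] using idem_comm e f

lemma eq_of_inverse {c x y : S} (hx : x * c * x = x) (hcx : c * x * c = c)
    (hy : y * c * y = y) (hcy : c * y * c = c) : x = y := by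
  have idem {p q : S} (h : p * q * p = p) : p * q * (p * q) = p * q := by
    rw [← mul_assoc, h]
  have hx' : x = y * c * x :=
    calc x = x * c * (y * c) * x := by rw [mul_assoc x c, ← mul_assoc c, hcy, hx]
      _ = y * c * (x * c) * x := by rw [mul_comm_of_mul_self (idem hx) (idem hy)]
      _ = y * c * x := by simp only [mul_assoc]; rw [← mul_assoc x c x, hx]
  have hy' : y = y * c * x :=
    calc y = y * (c * x * c) * y := by rw [hcx, hy]
      _ = y * (c * x * (c * y)) := by simp only [mul_assoc]
      _ = y * (c * y) * (c * x) := by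
        rw [mul_comm_of_mul_self (idem hcx) (idem hcy), ← mul_assoc]
      _ = y * c * x := by simp only [← mul_assoc]; rw [hy]
  rw [hx', ← hy']

lemma mul_inv_rev (a b : S) : (a * b)⁻¹ = b⁻¹ * a⁻¹ := by
  have hcomm : b * b⁻¹ * (a⁻¹ * a) = a⁻¹ * a * (b * b⁻¹) :=
    mul_comm_of_mul_self (mul_inv_mul_mul_inv b) (by simpa using mul_inv_mul_mul_inv a⁻¹)
  refine eq_of_inverse (c := a * b) (inv_mul_inv _) (mul_inv_mul _) ?_ ?_
  · calc b⁻¹ * a⁻¹ * (a * b) * (b⁻¹ * a⁻¹) = b⁻¹ * (b * b⁻¹ * (a⁻¹ * a)) * a⁻¹ := by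
          rw [hcomm]; simp only [mul_assoc]
      _ = b⁻¹ * b * b⁻¹ * (a⁻¹ * a * a⁻¹) := by simp only [mul_assoc]
      _ = b⁻¹ * a⁻¹ := by rw [inv_mul_inv, inv_mul_inv]
  · calc a * b * (b⁻¹ * a⁻¹) * (a * b) = a * (a⁻¹ * a * (b * b⁻¹)) * b := by
          rw [← hcomm]; simp only [mul_assoc]
      _ = a * a⁻¹ * a * (b * b⁻¹ * b) := by simp only [mul_assoc]
      _ = a * b := by rw [mul_inv_mul, mul_inv_mul]

end InverseSemigroup

open InverseSemigroup

section Ideals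

variable {S : Type*} [InverseSemigroup S]

lemma mem_Idl_iff {a x : S} : x ∈ Idl a ↔ ∃ s t, s * a * t = x := by
  constructor
  · rintro (((rfl | ⟨s, rfl⟩) | ⟨s, rfl⟩) | ⟨s, t, rfl⟩)
    · exact ⟨x * x⁻¹, x⁻¹ * x, by rw [mul_inv_mul, ← mul_assoc, mul_inv_mul]⟩
    · exact ⟨s, a⁻¹ * a, by rw [mul_assoc, ← mul_assoc a, mul_inv_mul]⟩
    · exact ⟨a * a⁻¹, s, by rw [mul_inv_mul]⟩
    · exact ⟨s, t, rfl⟩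
  · rintro ⟨s, t, rfl⟩
    exact Or.inr ⟨s, t, rfl⟩

lemma Idl_subset_of_mem {x y : S} (h : x ∈ Idl y) : Idl x ⊆ Idl y := by
  obtain ⟨s, t, rfl⟩ := mem_Idl_iff.1 h
  intro z hz
  obtain ⟨u, v, rfl⟩ := mem_Idl_iff.1 hz
  exact mem_Idl_iff.2 ⟨u * s, t * v, by simp only [mul_assoc]⟩

lemma Idl_mul_subset_left (a b : S) : Idl (a * b) ⊆ Idl a :=
  Idl_subset_of_mem (mem_Idl_iff.2 ⟨a * a⁻¹, b, by rw [mul_inv_mul]⟩)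

lemma Idl_mul_subset_right (a b : S) : Idl (a * b) ⊆ Idl b :=
  Idl_subset_of_mem (mem_Idl_iff.2 ⟨a, b⁻¹ * b, by rw [mul_assoc, ← mul_assoc b, mul_inv_mul]⟩)

lemma Idl_mul_inv (a : S) : Idl (a * a⁻¹) = Idl a := by
  refine (Idl_mul_subset_left a a⁻¹).antisymm ?_
  simpa only [mul_inv_mul] using Idl_mul_subset_left (a * a⁻¹) a

lemma Idl_inv_mul_mul (u y : S) : Idl (u⁻¹ * u * y) = Idl (u * y) := by
  refine (mul_assoc u⁻¹ u y ▸ Idl_mul_subset_right u⁻¹ (u * y)).antisymm ?_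
  simpa only [← mul_assoc, mul_inv_mul] using Idl_mul_subset_right u (u⁻¹ * u * y)

lemma mem_Jcl_iff {a b : S} : b ∈ Jcl a ↔ Idl a = Idl b := Iff.rfl

lemma mem_Jcl_mul_inv (t : S) : t ∈ Jcl (t * t⁻¹) := Idl_mul_inv t

lemma mul_inv_mem_Jcl {a t : S} (h : t ∈ Jcl a) : t * t⁻¹ ∈ Jcl a := by
  rw [mem_Jcl_iff, Idl_mul_inv]
  exact h

lemma inv_mul_mul_mem_Jcl {a u y : S} (h : u * y ∈ Jcl a) : u⁻¹ * u * y ∈ Jcl a := by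
  rw [mem_Jcl_iff, Idl_inv_mul_mul]
  exact h

lemma mul_mem_Jcl_of_mul_mul_mem {a u v w : S} (hu : u ∈ Jcl a) (h : u * v * w ∈ Jcl a) :
    u * v ∈ Jcl a := by
  rw [mem_Jcl_iff] at *
  exact (h ▸ Idl_mul_subset_left (u * v) w).antisymm (hu ▸ Idl_mul_subset_left u v)

end Ideals

section Generation

variable {M : Type*} [Mul M] [Inv M]

lemma IsInvSub.inter {T U : Set M} (hT : IsInvSub T) (hU : IsInvSub U) : IsInvSub (T ∩ U) :=
  ⟨fun a ha b hb => ⟨hT.1 a ha.1 b hb.1, hU.1 a ha.2 b hb.2⟩, fun a ha => ⟨hT.2 a ha.1, hU.2 a ha.2⟩⟩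

lemma InvGen.mem {X T : Set M} {t : M} (hg : InvGen X t) (hT : IsInvSub T) (hXT : X ⊆ T) :
    t ∈ T := by
  induction hg with
  | base hx => exact hXT hx
  | mul _ _ ha hb => exact hT.1 _ ha _ hb
  | inv _ ha => exact hT.2 _ ha

lemma InvGen.mono {X Y : Set M} {t : M} (hg : InvGen X t) (hXY : X ⊆ Y) : InvGen Y t := by
  induction hg with
  | base hx => exact .base (hXY hx)
  | mul _ _ ha hb => exact .mul ha hb
  | inv _ ha => exact .inv ha

def FinGenIn (T U : Set M) : Prop :=
  ∃ Y : Set M, Y.Finite ∧ Y ⊆ T ∧ ∀ u ∈ U, InvGen Y u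

lemma InvFG.finGenIn {T : Set M} (h : InvFG T) : FinGenIn T T := by
  obtain ⟨X, hXT, hTX⟩ := h
  exact ⟨X, X.finite_toSet, hXT, fun t ht => by rwa [hTX] at ht⟩

lemma InvFG.of_finGenIn {T : Set M} (hT : IsInvSub T) (h : FinGenIn T T) : InvFG T := by
  obtain ⟨Y, hY, hYT, hgen⟩ := h
  refine ⟨hY.toFinset, by simpa using hYT, ?_⟩
  ext t
  rw [Finite.coe_toFinset]
  exact ⟨hgen t, fun hg => hg.mem hT hYT⟩

lemma FinGenIn.mono {T T' U : Set M} (h : FinGenIn T U) (hT : T ⊆ T') : FinGenIn T' U := by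
  obtain ⟨Y, hY, hYT, hgen⟩ := h
  exact ⟨Y, hY, hYT.trans hT, hgen⟩

lemma FinGenIn.anti {T U U' : Set M} (h : FinGenIn T U) (hU : U' ⊆ U) : FinGenIn T U' := by
  obtain ⟨Y, hY, hYT, hgen⟩ := h
  exact ⟨Y, hY, hYT, fun u hu => hgen u (hU hu)⟩

lemma FinGenIn.biUnion {ι : Type*} {I : Set ι} (hI : I.Finite) {T : Set M} {U : ι → Set M}
    (h : ∀ i ∈ I, FinGenIn T (U i)) : FinGenIn T (⋃ i ∈ I, U i) := by
  choose! Y hY hYT hgen using h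
  refine ⟨⋃ i ∈ I, Y i, hI.biUnion hY, iUnion₂_subset hYT, fun u hu => ?_⟩
  obtain ⟨i, hi, hu⟩ := mem_iUnion₂.1 hu
  exact (hgen i hi u hu).mono (subset_biUnion_of_mem hi)

end Generation

inductive Chain {S : Type*} [Mul S] (J G : Set S) : S → Prop
  | base {g : S} : g ∈ G → Chain J G g
  | step {u g : S} : Chain J G u → g ∈ G → u * g ∈ J → Chain J G (u * g)

section Chains

variable {S : Type*} [InverseSemigroup S]

lemma Chain.mem {J G : Set S} {u : S} (h : Chain J G u) (hGJ : G ⊆ J) : u ∈ J := by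
  induction h with
  | base hg => exact hGJ hg
  | step _ _ hJ _ => exact hJ

lemma Chain.invGen {J G : Set S} {u : S} (h : Chain J G u) : InvGen G u := by
  induction h with
  | base hg => exact .base hg
  | step _ hg _ ih => exact .mul ih (.base hg)

lemma Chain.mul_of_inv_mul_mul_mem {J G : Set S} {u y : S} (hc : Chain J G u)
    (hg : u⁻¹ * u * y ∈ G) (h : u * y ∈ J) : Chain J G (u * y) := by
  have hu : u * (u⁻¹ * u * y) = u * y := by rw [← mul_assoc, ← mul_assoc, mul_inv_mul]
  rw [← hu] at h ⊢
  exact hc.step hg h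

def jGens (T X J : Set S) : Set S :=
  {g | g ∈ T ∩ J ∧ (g * g = g ∨ ∃ e ∈ {e : S | e * e = e}, ∃ x ∈ X, e * x = g)}

lemma jGens_subset (T X J : Set S) : jGens T X J ⊆ T ∩ J := fun _ hg => hg.1

lemma jGens_finite (hE : {e : S | e * e = e}.Finite) {X : Set S} (hX : X.Finite) (T J : Set S) :
    (jGens T X J).Finite :=
  (hE.union (Finite.image2 (· * ·) hE hX)).subset fun _ hg => hg.2

def ExtendsChains (T J G : Set S) (w : S) : Prop :=
  ∀ u ∈ T, Chain J G u → u * w ∈ J → Chain J G (u * w)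

variable {T X G : Set S} {a : S}

lemma ExtendsChains.mul (hT : IsInvSub T) (hGJ : G ⊆ Jcl a) {w₁ w₂ : S} (hw₁ : w₁ ∈ T)
    (h₁ : ExtendsChains T (Jcl a) G w₁) (h₂ : ExtendsChains T (Jcl a) G w₂) :
    ExtendsChains T (Jcl a) G (w₁ * w₂) := by
  intro u hu hc h
  rw [← mul_assoc] at h ⊢
  exact h₂ _ (hT.1 u hu w₁ hw₁) (h₁ u hu hc (mul_mem_Jcl_of_mul_mul_mem (hc.mem hGJ) h)) h

lemma extendsChains_of_mem (hT : IsInvSub T) {y : S} (hy : y ∈ X) (hyT : y ∈ T) :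
    ExtendsChains T (Jcl a) (jGens T X (Jcl a)) y := by
  intro u hu hc h
  refine hc.mul_of_inv_mul_mul_mem ⟨⟨?_, inv_mul_mul_mem_Jcl h⟩, ?_⟩ h
  · exact hT.1 _ (hT.1 _ (hT.2 u hu) u hu) y hyT
  · exact Or.inr ⟨u⁻¹ * u, by simpa using mul_inv_mul_mul_inv u⁻¹, y, hy, rfl⟩

lemma extendsChains_of_invGen (hT : IsInvSub T) (hXT : X ⊆ T) {w : S} (hw : InvGen X w) :
    ExtendsChains T (Jcl a) (jGens T (X ∪ X⁻¹) (Jcl a)) w ∧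
      ExtendsChains T (Jcl a) (jGens T (X ∪ X⁻¹) (Jcl a)) w⁻¹ := by
  have hGJ := (jGens_subset T (X ∪ X⁻¹) (Jcl a)).trans inter_subset_right
  induction hw with
  | base hx =>
    exact ⟨extendsChains_of_mem hT (Or.inl hx) (hXT hx),
      extendsChains_of_mem hT (Or.inr (by simpa using hx)) (hT.2 _ (hXT hx))⟩
  | @mul w₁ w₂ hw₁ hw₂ ih₁ ih₂ =>
    refine ⟨ih₁.1.mul hT hGJ (hw₁.mem hT hXT) ih₂.1, ?_⟩
    rw [InverseSemigroup.mul_inv_rev]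
    exact ih₂.2.mul hT hGJ (hT.2 _ (hw₂.mem hT hXT)) ih₁.2
  | inv _ ih => exact ⟨ih.2, by simpa using ih.1⟩

lemma chain_of_mem (hT : IsInvSub T) (hXT : X ⊆ T) {t : S} (ht : t ∈ T) (hta : t ∈ Jcl a)
    (hX : InvGen X t) : Chain (Jcl a) (jGens T (X ∪ X⁻¹) (Jcl a)) t := by
  have he : t * t⁻¹ ∈ T := hT.1 t ht _ (hT.2 t ht)
  have hc : Chain (Jcl a) (jGens T (X ∪ X⁻¹) (Jcl a)) (t * t⁻¹) :=
    .base ⟨⟨he, mul_inv_mem_Jcl hta⟩, Or.inl (mul_inv_mul_mul_inv t)⟩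
  simpa only [mul_inv_mul] using
    (extendsChains_of_invGen hT hXT hX).1 _ he hc (by rwa [mul_inv_mul])

lemma exists_finite_chains (hE : {e : S | e * e = e}.Finite) (hT : IsInvSub T) (hfg : InvFG T)
    (a : S) : ∃ G, G.Finite ∧ G ⊆ T ∩ Jcl a ∧ ∀ t ∈ T ∩ Jcl a, Chain (Jcl a) G t := by
  obtain ⟨X, hXT, hTX⟩ := hfg
  refine ⟨_, jGens_finite hE (X.finite_toSet.union X.finite_toSet.inv) T (Jcl a),
    jGens_subset _ _ _, fun t ⟨ht, hta⟩ => chain_of_mem hT hXT ht hta ?_⟩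
  rwa [hTX] at ht

end Chains

namespace PF

variable {S : Type*} [InverseSemigroup S] {J : Set S}

-- `some x` alone has type `Option J`, on which the products of `PF J` are not found.
abbrev zero : PF J := none

abbrev of (x : J) : PF J := some x

lemma zero_mul (p : PF J) : zero * p = zero := rfl

lemma mul_zero (p : PF J) : p * zero = zero := by
  cases p <;> rfl

lemma of_mul_of {x y : J} (h : (x : S) * y ∈ J) : of x * of y = of ⟨_, h⟩ := dif_pos h

lemma of_mul_of_of_notMem {x y : J} (h : (x : S) * y ∉ J) : of x * of y = zero := dif_neg h

lemma inv_zero : (zero : PF J)⁻¹ = zero := rfl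

lemma inv_of {x : J} (h : (x : S)⁻¹ ∈ J) : (of x)⁻¹ = of ⟨_, h⟩ := dif_pos h

lemma inv_of_of_notMem {x : J} (h : (x : S)⁻¹ ∉ J) : (of x)⁻¹ = zero := dif_neg h

end PF

section PrincipalFactor

variable {S : Type*} [InverseSemigroup S] {J : Set S}

lemma TJ_isInvSub {T : Set S} (hT : IsInvSub T) : IsInvSub (TJ J T) := by
  constructor
  · rintro p (rfl | ⟨x, hx, rfl⟩) q hq
    · exact Or.inl (PF.zero_mul q)
    rcases hq with rfl | ⟨y, hy, rfl⟩
    · exact Or.inl (PF.mul_zero _)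
    by_cases h : (x : S) * y ∈ J
    · exact Or.inr ⟨_, hT.1 _ hx _ hy, PF.of_mul_of h⟩
    · exact Or.inl (PF.of_mul_of_of_notMem h)
  · rintro p (rfl | ⟨x, hx, rfl⟩)
    · exact Or.inl PF.inv_zero
    by_cases h : (x : S)⁻¹ ∈ J
    · exact Or.inr ⟨_, hT.2 _ hx, PF.inv_of h⟩
    · exact Or.inl (PF.inv_of_of_notMem h)

lemma Chain.invGen_of {G : Set S} (hGJ : G ⊆ J) {u : S} (h : Chain J G u) (hu : u ∈ J) :
    InvGen (PF.of '' (Subtype.val ⁻¹' G)) (PF.of ⟨u, hu⟩) := by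
  induction h with
  | base hg => exact .base ⟨⟨_, hu⟩, hg, rfl⟩
  | step hc hg hJ ih =>
    have := (ih (hc.mem hGJ)).mul (.base ⟨⟨_, hGJ hg⟩, hg, rfl⟩)
    rwa [PF.of_mul_of hJ] at this

lemma InvGen.val_of_of {X : Set (PF J)} {x : J} (h : InvGen X (PF.of x)) :
    InvGen (Subtype.val '' (PF.of ⁻¹' X)) (x : S) := by
  generalize hp : PF.of x = p at h
  induction h generalizing x with
  | base hp' => subst hp; exact .base ⟨x, hp', rfl⟩
  | @mul p q _ _ ihp ihq =>
    rcases p with _ | y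
    · cases (PF.zero_mul q).symm.trans hp.symm
    rcases q with _ | z
    · cases (PF.mul_zero _).symm.trans hp.symm
    by_cases h : (y : S) * z ∈ J
    · rw [PF.of_mul_of h] at hp
      cases hp
      exact .mul (ihp rfl) (ihq rfl)
    · cases (PF.of_mul_of_of_notMem h).symm.trans hp.symm
  | @inv p _ ihp =>
    rcases p with _ | y
    · cases PF.inv_zero.symm.trans hp.symm
    by_cases h : (y : S)⁻¹ ∈ J
    · rw [PF.inv_of h] at hp
      cases hp
      exact .inv (ihp rfl)
    · cases (PF.inv_of_of_notMem h).symm.trans hp.symm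

end PrincipalFactor

section Main

variable {S : Type*} [InverseSemigroup S] {T : Set S}

lemma invFG_inter_Jcl (hE : {e : S | e * e = e}.Finite) (hT : IsInvSub T) (hfg : InvFG T)
    {a : S} (hJ : IsInvSub (Jcl a)) : InvFG (T ∩ Jcl a) := by
  obtain ⟨G, hG, hGT, hchain⟩ := exists_finite_chains hE hT hfg a
  exact .of_finGenIn (hT.inter hJ) ⟨G, hG, hGT, fun t ht => (hchain t ht).invGen⟩

lemma invFG_TJ (hE : {e : S | e * e = e}.Finite) (hT : IsInvSub T) (hfg : InvFG T) (a : S) :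
    InvFG (TJ (Jcl a) T) := by
  obtain ⟨G, hG, hGT, hchain⟩ := exists_finite_chains hE hT hfg a
  have hGJ : G ⊆ Jcl a := hGT.trans inter_subset_right
  refine .of_finGenIn (TJ_isInvSub hT) ⟨insert PF.zero (PF.of '' (Subtype.val ⁻¹' G)),
    ((hG.preimage Subtype.val_injective.injOn).image _).insert _, ?_, ?_⟩
  · rintro p (rfl | ⟨x, hx, rfl⟩)
    exacts [Or.inl rfl, Or.inr ⟨x, (hGT hx).1, rfl⟩]
  · rintro p (rfl | ⟨x, hx, rfl⟩)
    · exact .base (mem_insert _ _)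
    · exact ((hchain x ⟨hx, x.2⟩).invGen_of hGJ x.2).mono (subset_insert _ _)

lemma finGenIn_inter_of_invFG_TJ {J : Set S} (h : InvFG (TJ J T)) : FinGenIn T (T ∩ J) := by
  obtain ⟨X, hX, hXT, hgen⟩ := h.finGenIn
  refine ⟨_, (hX.preimage (Option.some_injective _).injOn).image _, ?_,
    fun t ⟨ht, htJ⟩ => InvGen.val_of_of (x := ⟨t, htJ⟩) (hgen _ (Or.inr ⟨_, ht, rfl⟩))⟩
  rintro _ ⟨y, hy, rfl⟩
  obtain h0 | ⟨x, hx, hxy⟩ := hXT hy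
  · cases h0
  · cases hxy
    exact hx

end Main

theorem stmt_3 {S : Type*} [InverseSemigroup S]
    (hE : {e : S | e * e = e}.Finite) (T : Set S) (hT : IsInvSub T) :
    InvFG T ↔ ∀ a : S, (T ∩ Jcl a).Nonempty →
      (IsInvSub (Jcl a) → InvFG (T ∩ Jcl a)) ∧
      (¬ IsInvSub (Jcl a) → InvFG (TJ (Jcl a) T)) := by
  refine ⟨fun hfg a _ => ⟨invFG_inter_Jcl hE hT hfg, fun _ => invFG_TJ hE hT hfg a⟩, fun h => ?_⟩
  set I := {e : S | e * e = e ∧ (T ∩ Jcl e).Nonempty}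
  have hI : ∀ e ∈ I, FinGenIn T (T ∩ Jcl e) := by
    intro e ⟨_, hne⟩
    by_cases hJ : IsInvSub (Jcl e)
    · exact ((h e hne).1 hJ).finGenIn.mono inter_subset_left
    · exact finGenIn_inter_of_invFG_TJ ((h e hne).2 hJ)
  have hcover : T ⊆ ⋃ e ∈ I, T ∩ Jcl e := fun t ht =>
    mem_biUnion (x := t * t⁻¹) ⟨mul_inv_mul_mul_inv t, t, ht, mem_Jcl_mul_inv t⟩
      ⟨ht, mem_Jcl_mul_inv t⟩
  exact .of_finGenIn hT ((FinGenIn.biUnion (hE.subset fun e he => he.1) hI).anti hcover)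
end

section
/- Let S be an ideal extension of the bicyclic semigroup B by a finite inverse semigroup with zero (i.e., B is an ideal of S and S \ B is finite). Then S has the Howson property. -/
def Bicyclic := ℕ × ℕ

instance : Mul Bicyclic :=
  ⟨fun a b => ((a.1 + b.1 - min a.2 b.1, a.2 + b.2 - min a.2 b.1) : ℕ × ℕ)⟩

instance : Inv Bicyclic := ⟨fun a => ((a.2, a.1) : ℕ × ℕ)⟩


/-!
The trace `T = φ⁻¹(U)` of an inverse subsemigroup `U` of `S` is an inverse subsemigroup of the
bicyclic semigroup. If `T` contains `(a, b)` with `a < b`, multiplying by `(a, b)` and its inverse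
shows that membership of `(x, y)` in `T` is `(b - a)`-periodic in `x` for `x ≥ a`, and likewise in
`y` by inversion. Otherwise `T` consists of idempotents, and if `U` is finitely generated then `T`
is finite: an idempotent product `s * t` is bounded by `s.1` and `t.2`, and a factor outside `B`
can be absorbed into the identity `(0, 0)` of `B`, so products of generators stay in a box fixed
by the generators and the finitely many elements outside `B`.

Hence the traces of `U`, `V` and so of `U ∩ V` are eventually periodic. An eventually periodic
inverse subsemigroup of `B` is generated by its elements in a finite box: `(x, y)` factors as
`(x, x₀) (x₀, y₀) (y₀, y)` with `x₀`, `y₀` the residues of `x`, `y`, and `(x₀, x)` is a power of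
`(x₀, x₀ + d)`. With the finitely many elements of `U ∩ V` outside `B` these generate `U ∩ V`.
-/

namespace InvGen

variable {S : Type*} [Mul S] [Inv S]

lemma mono_s14 {X Y : Set S} (hXY : X ⊆ Y) {s : S} (h : InvGen X s) : InvGen Y s := by
  induction h with
  | base hx => exact base (hXY hx)
  | mul _ _ iha ihb => exact mul iha ihb
  | inv _ iha => exact inv iha

lemma mem_of_subset {T X : Set S} (hT : IsInvSub T) (hX : X ⊆ T) {s : S} (h : InvGen X s) :
    s ∈ T := by
  induction h with
  | base hx => exact hX hx
  | mul _ _ iha ihb => exact hT.1 _ iha _ ihb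
  | inv _ iha => exact hT.2 _ iha

lemma map {R : Type*} [Mul R] [Inv R] {f : R → S} (hmul : ∀ a b, f (a * b) = f a * f b)
    (hinv : ∀ a, f a⁻¹ = (f a)⁻¹) {X : Set R} {r : R} (h : InvGen X r) : InvGen (f '' X) (f r) := by
  induction h with
  | base hx => exact base (Set.mem_image_of_mem f hx)
  | mul _ _ iha ihb => rw [hmul]; exact mul iha ihb
  | inv _ iha => rw [hinv]; exact inv iha

end InvGen

namespace IsInvSub

variable {S : Type*} [Mul S] [Inv S]

lemma inter_s14 {U V : Set S} (hU : IsInvSub U) (hV : IsInvSub V) : IsInvSub (U ∩ V) :=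
  ⟨fun a ha b hb => ⟨hU.1 a ha.1 b hb.1, hV.1 a ha.2 b hb.2⟩,
    fun a ha => ⟨hU.2 a ha.1, hV.2 a ha.2⟩⟩

lemma preimage {R : Type*} [Mul R] [Inv R] {f : R → S} (hmul : ∀ a b, f (a * b) = f a * f b)
    (hinv : ∀ a, f a⁻¹ = (f a)⁻¹) {U : Set S} (hU : IsInvSub U) : IsInvSub (f ⁻¹' U) :=
  ⟨fun a ha b hb => by simpa only [Set.mem_preimage, hmul] using hU.1 _ ha _ hb,
   fun a ha => by simpa only [Set.mem_preimage, hinv] using hU.2 _ ha⟩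

end IsInvSub

namespace Bicyclic

abbrev mk (a b : ℕ) : Bicyclic := (a, b)

lemma mk_mul_mk_of_eq {a b c d x y : ℕ} (hx : a + c - min b c = x) (hy : b + d - min b c = y) :
    mk a b * mk c d = mk x y := by
  rw [← hx, ← hy]; rfl

lemma mk_inv (a b : ℕ) : (mk a b)⁻¹ = mk b a := rfl

lemma mk_mul_mk_self (x y z : ℕ) : mk x y * mk y z = mk x z :=
  mk_mul_mk_of_eq (by omega) (by omega)

lemma mk_zero_mul (t : Bicyclic) : mk 0 0 * t = t :=
  mk_mul_mk_of_eq (c := t.1) (d := t.2) (by omega) (by omega)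

lemma mul_mk_zero (t : Bicyclic) : t * mk 0 0 = t :=
  mk_mul_mk_of_eq (a := t.1) (b := t.2) (by omega) (by omega)

def box (M : ℕ) : Set Bicyclic := {t | t.1 ≤ M ∧ t.2 ≤ M}

lemma finite_box (M : ℕ) : (box M).Finite :=
  ((Set.finite_Iic M).prod (Set.finite_Iic M)).subset fun _ ht => ht

lemma exists_subset_box {T : Set Bicyclic} (hT : T.Finite) : ∃ M, T ⊆ box M := by
  obtain ⟨M, hM⟩ := (hT.image fun t : Bicyclic => max t.1 t.2).bddAbove
  exact ⟨M, fun t ht => max_le_iff.1 (hM ⟨t, ht, rfl⟩)⟩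

lemma inv_mem_box {t : Bicyclic} {M : ℕ} (ht : t ∈ box M) : t⁻¹ ∈ box M := ⟨ht.2, ht.1⟩

/-- An idempotent product `s * t` is `(s.1, s.1)` or `(t.2, t.2)`. -/
lemma mul_mem_box_of_fst_eq_snd {s t : Bicyclic} {M : ℕ} (hdiag : (s * t).1 = (s * t).2)
    (hs : s.1 ≤ M) (ht : t.2 ≤ M) : s * t ∈ box M := by
  change s.1 + t.1 - min s.2 t.1 = s.2 + t.2 - min s.2 t.1 at hdiag
  exact ⟨by change s.1 + t.1 - min s.2 t.1 ≤ M; omega,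
    by change s.2 + t.2 - min s.2 t.1 ≤ M; omega⟩

section Periodic

variable {T : Set Bicyclic} {d N : ℕ}

lemma mk_mem_comm (hT : ∀ t ∈ T, t⁻¹ ∈ T) {x y : ℕ} : mk x y ∈ T ↔ mk y x ∈ T :=
  ⟨hT _, hT _⟩

lemma mk_self_mem (hT : IsInvSub T) {x y : ℕ} (h : mk x y ∈ T) : mk x x ∈ T := by
  simpa only [mk_inv, mk_mul_mk_self] using hT.1 _ h _ (hT.2 _ h)

/-- Periodicity in the first coordinate; for inverse-closed `T` it transfers to the second
one by `mk_mem_comm`. -/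
def EventuallyPeriodic (d N : ℕ) (T : Set Bicyclic) : Prop :=
  ∀ x y, N ≤ x → (mk x y ∈ T ↔ mk (x + d) y ∈ T)

namespace EventuallyPeriodic

lemma mem_add_mul_iff (h : EventuallyPeriodic d N T) (k : ℕ) {x : ℕ} (y : ℕ) (hx : N ≤ x) :
    mk (x + k * d) y ∈ T ↔ mk x y ∈ T := by
  induction k with
  | zero => simp
  | succ k ih => rw [add_one_mul, ← add_assoc, ← h _ y (by omega), ih]

lemma dvd (h : EventuallyPeriodic d N T) {d' : ℕ} (hd : d ∣ d') : EventuallyPeriodic d' N T := by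
  obtain ⟨k, rfl⟩ := hd
  intro x y hx
  rw [mul_comm, h.mem_add_mul_iff k y hx]

lemma mono_s14 (h : EventuallyPeriodic d N T) {N' : ℕ} (hN : N ≤ N') : EventuallyPeriodic d N' T :=
  fun x y hx => h x y (hN.trans hx)

lemma inter_s14 {T' : Set Bicyclic} (h : EventuallyPeriodic d N T) (h' : EventuallyPeriodic d N T') :
    EventuallyPeriodic d N (T ∩ T') :=
  fun x y hx => and_congr (h x y hx) (h' x y hx)

end EventuallyPeriodic

lemma eventuallyPeriodic_of_finite (hT : T.Finite) : ∃ N, EventuallyPeriodic 1 N T := by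
  obtain ⟨M, hM⟩ := exists_subset_box hT
  refine ⟨M + 1, fun x y hx => iff_of_false (fun h => ?_) (fun h => ?_)⟩
  · exact absurd (hM h).1 (by change ¬x ≤ M; omega)
  · exact absurd (hM h).1 (by change ¬x + 1 ≤ M; omega)

lemma eventuallyPeriodic_of_mem (hT : IsInvSub T) {a b : ℕ} (hab : a < b) (hmem : mk a b ∈ T) :
    EventuallyPeriodic (b - a) a T := by
  intro x y hx
  constructor
  · intro h
    have hup : mk x x * mk a b = mk x (x + (b - a)) := mk_mul_mk_of_eq (by omega) (by omega)
    have hstep := hT.1 _ (mk_self_mem hT h) _ hmem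
    rw [hup] at hstep
    simpa only [mk_inv, mk_mul_mk_self] using hT.1 _ (hT.2 _ hstep) _ h
  · intro h
    have hdown : mk a b * mk (x + (b - a)) (x + (b - a)) = mk x (x + (b - a)) :=
      mk_mul_mk_of_eq (by omega) (by omega)
    have hstep := hT.1 _ hmem _ (mk_self_mem hT h)
    rw [hdown] at hstep
    simpa only [mk_mul_mk_self] using hT.1 _ hstep _ h

lemma exists_residue {d : ℕ} (hd : 0 < d) (N x : ℕ) :
    ∃ x₀ k, x = x₀ + k * d ∧ x₀ < N + d ∧ (k = 0 ∨ N ≤ x₀) := by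
  rcases lt_or_ge x N with hx | hx
  · exact ⟨x, 0, by simp, by omega, Or.inl rfl⟩
  · refine ⟨N + (x - N) % d, (x - N) / d, ?_, by have := Nat.mod_lt (x - N) hd; omega, by omega⟩
    have := Nat.mod_add_div' (x - N) d
    omega

lemma EventuallyPeriodic.mem_iff_of_residue (h : EventuallyPeriodic d N T) {x x₀ k : ℕ} (y : ℕ)
    (hx : x = x₀ + k * d) (hk : k = 0 ∨ N ≤ x₀) : mk x y ∈ T ↔ mk x₀ y ∈ T := by
  subst hx
  rcases hk with rfl | hk
  · simp
  · exact h.mem_add_mul_iff k y hk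

lemma invGen_mk_add_mul {G : Set Bicyclic} {a : ℕ} (hg : InvGen G (mk a (a + d))) (m : ℕ) :
    InvGen G (mk a (a + (m + 1) * d)) := by
  induction m with
  | zero => simpa using hg
  | succ m ih =>
    have hpow : mk a (a + (m + 1) * d) * mk a (a + d) = mk a (a + (m + 1 + 1) * d) :=
      mk_mul_mk_of_eq (by omega) (by rw [min_eq_right (by omega)]; ring_nf; omega)
    exact hpow ▸ ih.mul hg

/-- Large enough to contain `(x₀, y₀)` and `(x₀, x₀ + d)` for residues `x₀, y₀ < N + d`. -/
abbrev window (T : Set Bicyclic) (d N : ℕ) : Set Bicyclic := T ∩ box (N + 2 * d)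

lemma EventuallyPeriodic.invGen_mk_residue (h : EventuallyPeriodic d N T) (hT : IsInvSub T)
    {x x₀ k : ℕ} (hxx : mk x x ∈ T) (hx : x = x₀ + k * d) (hx₀ : x₀ < N + d)
    (hk : k = 0 ∨ N ≤ x₀) : InvGen (window T d N) (mk x₀ x) := by
  have hx₀x : mk x₀ x ∈ T := (h.mem_iff_of_residue x hx hk).1 hxx
  rcases k with _ | m
  · rw [zero_mul, add_zero] at hx
    subst x
    exact .base ⟨hx₀x, by change x₀ ≤ _ ∧ x₀ ≤ _; omega⟩
  · have hN : N ≤ x₀ := hk.resolve_left m.succ_ne_zero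
    rw [hx, show x₀ + (m + 1) * d = x₀ + d + m * d by ring, mk_mem_comm hT.2,
      h.mem_add_mul_iff m x₀ (by omega), ← mk_mem_comm hT.2] at hx₀x
    have hg : mk x₀ (x₀ + d) ∈ window T d N := ⟨hx₀x, by change x₀ ≤ _ ∧ x₀ + d ≤ _; omega⟩
    exact hx ▸ invGen_mk_add_mul (.base hg) m

lemma EventuallyPeriodic.invGen_window (h : EventuallyPeriodic d N T) (hT : IsInvSub T)
    (hd : 0 < d) {t : Bicyclic} (ht : t ∈ T) : InvGen (window T d N) t := by
  obtain ⟨x, y⟩ := t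
  change mk x y ∈ T at ht
  obtain ⟨x₀, k, hx, hx₀, hk⟩ := exists_residue hd N x
  obtain ⟨y₀, l, hy, hy₀, hl⟩ := exists_residue hd N y
  have hcore : mk x₀ y₀ ∈ T := by
    rw [h.mem_iff_of_residue y hx hk, mk_mem_comm hT.2, h.mem_iff_of_residue x₀ hy hl] at ht
    exact (mk_mem_comm hT.2).1 ht
  have hleft := h.invGen_mk_residue hT (mk_self_mem hT ht) hx hx₀ hk
  have hright := h.invGen_mk_residue hT (mk_self_mem hT ((mk_mem_comm hT.2).1 ht)) hy hy₀ hl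
  have hcore' : InvGen (window T d N) (mk x₀ y₀) :=
    .base ⟨hcore, by change x₀ ≤ _ ∧ y₀ ≤ _; omega⟩
  have hfactor : (mk x₀ x)⁻¹ * mk x₀ y₀ * mk y₀ y = mk x y := by
    rw [mk_inv, mk_mul_mk_self, mk_mul_mk_self]
  change InvGen _ (mk x y)
  exact hfactor ▸ (hleft.inv.mul hcore').mul hright

end Periodic

end Bicyclic

section IdealExtension

open Bicyclic

variable {S : Type*} [InverseSemigroup S] {φ : Bicyclic → S}

lemma exists_preimage_closure_subset_box
    (hideal : ∀ s : S, ∀ b ∈ Set.range φ, s * b ∈ Set.range φ ∧ b * s ∈ Set.range φ)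
    (hfin : (Set.range φ)ᶜ.Finite) (hinj : Function.Injective φ)
    (hmul : ∀ a b : Bicyclic, φ (a * b) = φ a * φ b) (hinv : ∀ a : Bicyclic, φ a⁻¹ = (φ a)⁻¹)
    (X : Finset S) (hdiag : ∀ t : Bicyclic, InvGen (↑X : Set S) (φ t) → t.1 = t.2) :
    ∃ M, φ ⁻¹' {s | InvGen (↑X : Set S) s} ⊆ box M := by
  set e := φ (mk 0 0)
  have he : e ∈ Set.range φ := ⟨_, rfl⟩
  have he_mul (t : Bicyclic) : e * φ t = φ t := by rw [← hmul, mk_zero_mul]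
  have hmul_e (t : Bicyclic) : φ t * e = φ t := by rw [← hmul, mul_mk_zero]
  -- `a * φ r = (a * e) * φ r` and `φ s * b = φ s * (e * b)`: factors outside `B` enter through `K`.
  set K : Set S := ↑X ∪ Set.image2 (· * ·) (Set.range φ)ᶜ (Set.range φ)ᶜ ∪
    (· * e) '' (Set.range φ)ᶜ ∪ (e * ·) '' (Set.range φ)ᶜ
  have hK : K.Finite :=
    ((X.finite_toSet.union (hfin.image2 _ hfin)).union (hfin.image _)).union (hfin.image _)
  obtain ⟨M, hM⟩ := exists_subset_box (hK.preimage hinj.injOn)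
  refine ⟨M, fun t ht => ?_⟩
  have hprod {t s r : Bicyclic} (ht : InvGen (↑X : Set S) (φ t)) (hsr : φ t = φ s * φ r)
      (hs : s.1 ≤ M) (hr : r.2 ≤ M) : t ∈ box M := by
    rw [← hmul] at hsr
    obtain rfl := hinj hsr
    exact mul_mem_box_of_fst_eq_snd (hdiag _ ht) hs hr
  suffices ∀ u, InvGen (↑X : Set S) u → ∀ t, φ t = u → t ∈ box M from this _ ht t rfl
  intro u hu
  induction hu with
  | base hx => exact fun t ht => hM (Or.inl (Or.inl (Or.inl (ht ▸ hx))))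
  | @mul a b ha hb iha ihb =>
    intro t ht
    have htX : InvGen (↑X : Set S) (φ t) := ht ▸ ha.mul hb
    by_cases haφ : a ∈ Set.range φ <;> by_cases hbφ : b ∈ Set.range φ
    · obtain ⟨s, rfl⟩ := haφ
      obtain ⟨r, rfl⟩ := hbφ
      exact hprod htX ht (iha s rfl).1 (ihb r rfl).2
    · obtain ⟨s, rfl⟩ := haφ
      obtain ⟨r, hr⟩ := (hideal b e he).2
      refine hprod htX (s := s) (r := r) ?_ (iha s rfl).1 (hM (Or.inr ⟨b, hbφ, hr.symm⟩)).2
      rw [ht, hr, ← mul_assoc, hmul_e]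
    · obtain ⟨r, rfl⟩ := hbφ
      obtain ⟨s, hs⟩ := (hideal a e he).1
      refine hprod htX (s := s) (r := r) ?_ (hM (Or.inl (Or.inr ⟨a, haφ, hs.symm⟩))).1
        (ihb r rfl).2
      rw [ht, hs, mul_assoc, he_mul]
    · exact hM (Or.inl (Or.inl (Or.inr ⟨a, haφ, b, hbφ, ht.symm⟩)))
  | @inv a ha iha =>
    intro t ht
    have : φ t⁻¹ = a := by rw [hinv, ht, InverseSemigroup.inv_invol]
    exact inv_mem_box (iha _ this)

lemma exists_eventuallyPeriodic_preimage
    (hideal : ∀ s : S, ∀ b ∈ Set.range φ, s * b ∈ Set.range φ ∧ b * s ∈ Set.range φ)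
    (hfin : (Set.range φ)ᶜ.Finite) (hinj : Function.Injective φ)
    (hmul : ∀ a b : Bicyclic, φ (a * b) = φ a * φ b) (hinv : ∀ a : Bicyclic, φ a⁻¹ = (φ a)⁻¹)
    {U : Set S} (hU : IsInvSub U) (hfg : InvFG U) :
    ∃ d N, 0 < d ∧ EventuallyPeriodic d N (φ ⁻¹' U) := by
  have hT := hU.preimage hmul hinv
  by_cases hdiag : ∀ t ∈ φ ⁻¹' U, t.1 = t.2
  · obtain ⟨X, -, rfl⟩ := hfg
    obtain ⟨M, hM⟩ := exists_preimage_closure_subset_box hideal hfin hinj hmul hinv X hdiag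
    obtain ⟨N, hN⟩ := eventuallyPeriodic_of_finite ((finite_box M).subset hM)
    exact ⟨1, N, one_pos, hN⟩
  · push Not at hdiag
    obtain ⟨⟨a, b⟩, hab, hne⟩ := hdiag
    rcases Nat.lt_or_gt_of_ne hne with hlt | hgt
    · exact ⟨b - a, a, by omega, eventuallyPeriodic_of_mem hT hlt hab⟩
    · exact ⟨a - b, b, by omega, eventuallyPeriodic_of_mem hT hgt ((mk_mem_comm hT.2).1 hab)⟩

lemma invFG_of_eventuallyPeriodic_preimage (hfin : (Set.range φ)ᶜ.Finite)
    (hmul : ∀ a b : Bicyclic, φ (a * b) = φ a * φ b) (hinv : ∀ a : Bicyclic, φ a⁻¹ = (φ a)⁻¹)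
    {U : Set S} (hU : IsInvSub U) {d N : ℕ} (hd : 0 < d)
    (hP : EventuallyPeriodic d N (φ ⁻¹' U)) : InvFG U := by
  have hX : (φ '' window (φ ⁻¹' U) d N ∪ U \ Set.range φ).Finite :=
    (((finite_box _).subset Set.inter_subset_right).image φ).union
      (hfin.subset fun _ hs => hs.2)
  have hXU : φ '' window (φ ⁻¹' U) d N ∪ U \ Set.range φ ⊆ U :=
    Set.union_subset (Set.image_subset_iff.2 fun _ ht => ht.1) Set.sdiff_subset
  refine ⟨hX.toFinset, by rwa [hX.coe_toFinset], ?_⟩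
  rw [hX.coe_toFinset]
  ext s
  refine ⟨fun hs => ?_, fun hs => hs.mem_of_subset hU hXU⟩
  by_cases hsφ : s ∈ Set.range φ
  · obtain ⟨t, rfl⟩ := hsφ
    exact ((hP.invGen_window (hU.preimage hmul hinv) hd hs).map hmul hinv).mono_s14
      Set.subset_union_left
  · exact .base (Or.inr ⟨hs, hsφ⟩)

end IdealExtension

theorem stmt_14 {S : Type*} [InverseSemigroup S] (B : Set S)
    (hideal : ∀ s : S, ∀ b ∈ B, s * b ∈ B ∧ b * s ∈ B)
    (hfin : (Bᶜ : Set S).Finite)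
    (φ : Bicyclic → S) (hinj : Function.Injective φ) (hrange : Set.range φ = B)
    (hmul : ∀ a b : Bicyclic, φ (a * b) = φ a * φ b)
    (hinv : ∀ a : Bicyclic, φ a⁻¹ = (φ a)⁻¹) :
    Howson S := by
  subst hrange
  intro U V hU hV hfgU hfgV
  obtain ⟨dU, NU, hdU, hPU⟩ :=
    exists_eventuallyPeriodic_preimage hideal hfin hinj hmul hinv hU hfgU
  obtain ⟨dV, NV, hdV, hPV⟩ :=
    exists_eventuallyPeriodic_preimage hideal hfin hinj hmul hinv hV hfgV
  have hP : Bicyclic.EventuallyPeriodic (dU * dV) (max NU NV) (φ ⁻¹' (U ∩ V)) :=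
    ((hPU.dvd (dvd_mul_right dU dV)).mono_s14 (le_max_left NU NV)).inter_s14
      ((hPV.dvd (dvd_mul_left dV dU)).mono_s14 (le_max_right NU NV))
  exact invFG_of_eventuallyPeriodic_preimage hfin hmul hinv (hU.inter_s14 hV) (Nat.mul_pos hdU hdV) hP
end
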